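/- In the minimal counterexample (G, C_0), every vertex of G not on C_0 has degree at least 3. -/

import Mathlib

/-!
Common definitions for formalizing "A relaxation of the Bordeaux Conjecture"
(Liu, Li, Yu).  We model a plane graph combinatorially: a simple graph together
with a set of faces (each given by its boundary cycle, a list of vertices in
cyclic order), a distinguished outer face, and, for each cycle, the sets of
vertices drawn strictly inside and strictly outside of it.

A (2,0,0)-coloring uses colors `0, 1, 2 : Fin 3`, where color `0` is the color
of deficiency 2 (called "color 1" in the paper) and colors `1` and `2` must
induce independent sets.
-/

variable {V : Type} [Fintype V] [DecidableEq V]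

/-- `l` is the list of vertices of a cycle of `G`, in cyclic order. -/
def IsCycleList (G : SimpleGraph V) (l : List V) : Prop :=
  3 ≤ l.length ∧ l.Nodup ∧ ∀ p ∈ l.zip (l.rotate 1), G.Adj p.1 p.2

/-- Two lists represent the same cyclic sequence, up to rotation and reflection. -/
def SameCycle (l l' : List V) : Prop :=
  ∃ n : ℕ, l'.rotate n = l ∨ l'.reverse.rotate n = l

/-- `u` and `v` are consecutive vertices (i.e. joined by an edge) of the cycle `l`. -/
def CycAdj (l : List V) (u v : V) : Prop :=
  (u, v) ∈ l.zip (l.rotate 1) ∨ (v, u) ∈ l.zip (l.rotate 1)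

/-- A combinatorial model of a plane graph. -/
structure PlaneGraph (V : Type) [Fintype V] [DecidableEq V] where
  /-- the underlying abstract simple graph -/
  G : SimpleGraph V
  /-- the faces, given by their boundary cycles -/
  faces : Set (List V)
  /-- the boundary cycle of the outer (unbounded) face -/
  outer : List V
  outer_mem : outer ∈ faces
  faces_cycle : ∀ l ∈ faces, IsCycleList G l
  /-- the set of vertices strictly inside a cycle -/
  inside : List V → Set V
  /-- the set of vertices strictly outside a cycle -/
  outside : List V → Set V
  inside_outside_cover : ∀ l, IsCycleList G l → ∀ v : V,
    v ∈ inside l ∨ v ∈ outside l ∨ v ∈ l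
  inside_outside_disjoint : ∀ l, Disjoint (inside l) (outside l)
  on_cycle_not_inside_outside : ∀ l, ∀ v ∈ l, v ∉ inside l ∧ v ∉ outside l
  no_edge_inside_outside : ∀ l, IsCycleList G l →
    ∀ u ∈ inside l, ∀ v ∈ outside l, ¬ G.Adj u v
  inner_face_inside_empty : ∀ l ∈ faces, ¬ SameCycle l outer → inside l = ∅
  outer_outside_empty : outside outer = ∅

namespace PlaneGraph

/-- `l` is the boundary cycle of a face of `P` (up to rotation/reflection). -/
def IsFace (P : PlaneGraph V) (l : List V) : Prop :=
  ∃ l' ∈ P.faces, SameCycle l l'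

/-- The degree of a vertex. -/
noncomputable def deg (P : PlaneGraph V) (v : V) : ℕ :=
  {u | P.G.Adj v u}.ncard

/-- A separating cycle: there are vertices strictly inside and strictly outside. -/
def Separating (P : PlaneGraph V) (l : List V) : Prop :=
  IsCycleList P.G l ∧ (P.inside l).Nonempty ∧ (P.outside l).Nonempty

end PlaneGraph

/-- `a`, `b`, `c` span a triangle of `G`. -/
def IsTriangle (G : SimpleGraph V) (a b c : V) : Prop :=
  G.Adj a b ∧ G.Adj b c ∧ G.Adj c a

/-- `v` is incident to (i.e. lies on) some triangle of `G`. -/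
def OnTriangle (G : SimpleGraph V) (v : V) : Prop :=
  ∃ a b : V, IsTriangle G v a b

/-- `G` contains no cycle of length 5. -/
def NoFiveCycle (G : SimpleGraph V) : Prop :=
  ∀ l : List V, IsCycleList G l → l.length ≠ 5

/-- No two distinct triangles of `G` share a vertex. -/
def NoIntersectingTriangles (G : SimpleGraph V) : Prop :=
  ∀ a b c d e f : V, IsTriangle G a b c → IsTriangle G d e f →
    (({a, b, c} : Set V) ∩ ({d, e, f} : Set V)).Nonempty →
    ({a, b, c} : Set V) = ({d, e, f} : Set V)

/-- Membership in the family `𝒢` of plane graphs with no 5-cycles and no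
two triangles sharing a vertex. -/
def PlaneGraph.InFamilyG (P : PlaneGraph V) : Prop :=
  NoFiveCycle P.G ∧ NoIntersectingTriangles P.G

/-- A (2,0,0)-coloring of `G`: color `0` induces a subgraph of maximum degree
at most `2`, and colors `1` and `2` induce independent sets. -/
def IsCol200 (G : SimpleGraph V) (c : V → Fin 3) : Prop :=
  (∀ u v : V, G.Adj u v → c u ≠ 0 → c u ≠ c v) ∧
  (∀ v : V, c v = 0 → {u | G.Adj v u ∧ c u = 0}.ncard ≤ 2)

/-- A (2,0,0)-coloring of the cycle `l`, viewed as a subgraph. -/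
def IsCol200Cycle (l : List V) (c : V → Fin 3) : Prop :=
  (∀ u v : V, CycAdj l u v → c u ≠ 0 → c u ≠ c v) ∧
  (∀ v ∈ l, c v = 0 → {u | CycAdj l u v ∧ c u = 0}.ncard ≤ 2)

/-- `c` agrees with `c₀` on the cycle `l` and every vertex off `l` receives a
color different from those of all of its neighbors on `l`. -/
def SuperextendsOn (G : SimpleGraph V) (l : List V) (c₀ c : V → Fin 3) : Prop :=
  (∀ v ∈ l, c v = c₀ v) ∧ ∀ v : V, v ∉ l → ∀ u ∈ l, G.Adj v u → c v ≠ c u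

/-- `(G, l)` is superextendable: every (2,0,0)-coloring of the cycle `l` extends to
a (2,0,0)-coloring of `G` in which every vertex off `l` gets a color different from
those of all of its neighbors on `l`. -/
def Superextendable (G : SimpleGraph V) (l : List V) : Prop :=
  ∀ c₀ : V → Fin 3, IsCol200Cycle l c₀ →
    ∃ c : V → Fin 3, IsCol200 G c ∧ SuperextendsOn G l c₀ c

/-- `σ(G) = |V(G)| + |E(G)|`. -/
noncomputable def PlaneGraph.sigma (P : PlaneGraph V) : ℕ :=
  Fintype.card V + P.G.edgeSet.ncard

/-- `(P, C₀)` is a counterexample to the main theorem that minimizes `σ`: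
`P` is a plane graph in `𝒢`, `C₀` is a triangle or a 7-cycle of `P`,
`(P, C₀)` is not superextendable, and every pair `(P', C')` of this kind with
smaller `σ` is superextendable. -/
def IsMinCex (P : PlaneGraph V) (C₀ : List V) : Prop :=
  P.InFamilyG ∧ IsCycleList P.G C₀ ∧ (C₀.length = 3 ∨ C₀.length = 7) ∧
  ¬ Superextendable P.G C₀ ∧
  ∀ (n : ℕ) (P' : PlaneGraph (Fin n)) (C' : List (Fin n)),
    P'.InFamilyG → IsCycleList P'.G C' → (C'.length = 3 ∨ C'.length = 7) →
    P'.sigma < P.sigma → Superextendable P'.G C'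

/-- The graph obtained from `G` by identifying the vertices `u` and `w` (the merged
vertex is `u`; the vertex `w` becomes isolated). -/
def identify (G : SimpleGraph V) (u w : V) : SimpleGraph V where
  Adj x y := x ≠ y ∧ x ≠ w ∧ y ≠ w ∧
    (G.Adj x y ∨ (x = u ∧ G.Adj w y) ∨ (y = u ∧ G.Adj x w))
  symm := by
    constructor
    rintro x y ⟨hxy, hxw, hyw, h⟩
    refine ⟨hxy.symm, hyw, hxw, ?_⟩
    rcases h with h | ⟨hx, h⟩ | ⟨hy, h⟩
    · exact Or.inl h.symm
    · exact Or.inr (Or.inr ⟨hx, h.symm⟩)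
    · exact Or.inr (Or.inl ⟨hy, h.symm⟩)
  loopless := by
    constructor
    rintro x ⟨hxx, -⟩
    exact hxx rfl

/-- The graph obtained from `G` by deleting the vertices of `S`
(the deleted vertices become isolated). -/
def delVerts (G : SimpleGraph V) (S : Set V) : SimpleGraph V where
  Adj x y := G.Adj x y ∧ x ∉ S ∧ y ∉ S
  symm := ⟨fun _ _ h => ⟨h.1.symm, h.2.2, h.2.1⟩⟩
  loopless := ⟨fun x h => G.loopless.irrefl x h.1⟩

/-- Base special 3-faces: `(3,3,5⁻)`-faces and `(3,4,4)`-faces disjoint from `C₀`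
(the first listed vertex is a 3-vertex). -/
def IsBaseSpecial (P : PlaneGraph V) (C₀ : List V) (u v w : V) : Prop :=
  P.IsFace [u, v, w] ∧ u ∉ C₀ ∧ v ∉ C₀ ∧ w ∉ C₀ ∧ P.deg u = 3 ∧
    ((P.deg v = 3 ∧ P.deg w ≤ 5) ∨ (P.deg v = 4 ∧ P.deg w = 4))

/-- Special 3-faces of rank at most `n`, following the paper's recursive
definition: the base special faces are the `(3,3,5⁻)`- and `(3,4,4)`-faces
disjoint from `C₀`; a `(3,5,5)`-face `uvw` (disjoint from `C₀`, with `d(u)=3`)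
is special of rank `n+1` when each off-face neighbor of each of its two
5-vertices is a 3-vertex lying on a pendant special 3-face of rank at most `n`,
i.e. the two 5-vertices have six pendant special 3-faces altogether. -/
def SpecialRank (P : PlaneGraph V) (C₀ : List V) : ℕ → V → V → V → Prop
  | 0 => fun u v w => IsBaseSpecial P C₀ u v w
  | n + 1 => fun u v w =>
      SpecialRank P C₀ n u v w ∨
      (P.IsFace [u, v, w] ∧ u ∉ C₀ ∧ v ∉ C₀ ∧ w ∉ C₀ ∧
        P.deg u = 3 ∧ P.deg v = 5 ∧ P.deg w = 5 ∧
        (∀ x : V, P.G.Adj v x → x ≠ u → x ≠ w →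
          ∃ a b c : V, SpecialRank P C₀ n a b c ∧ v ≠ a ∧ v ≠ b ∧ v ≠ c ∧
            (x = a ∨ x = b ∨ x = c) ∧ P.deg x = 3) ∧
        (∀ x : V, P.G.Adj w x → x ≠ u → x ≠ v →
          ∃ a b c : V, SpecialRank P C₀ n a b c ∧ w ≠ a ∧ w ≠ b ∧ w ≠ c ∧
            (x = a ∨ x = b ∨ x = c) ∧ P.deg x = 3))

/-- `uvw` is a special 3-face (of some rank). -/
def IsSpecial (P : PlaneGraph V) (C₀ : List V) (u v w : V) : Prop :=
  ∃ n : ℕ, SpecialRank P C₀ n u v w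

/-- The set `S` is the vertex set of a special 3-face. -/
def IsSpecialOn (P : PlaneGraph V) (C₀ : List V) (S : Set V) : Prop :=
  ∃ a b c : V, IsSpecial P C₀ a b c ∧ S = {a, b, c}

/-- `S` is the vertex set of a pendant special 3-face of `y`:  a special 3-face
not containing `y` one of whose 3-vertices is adjacent to `y`. -/
def PendantSpecial (P : PlaneGraph V) (C₀ : List V) (y : V) (S : Set V) : Prop :=
  IsSpecialOn P C₀ S ∧ y ∉ S ∧ ∃ x ∈ S, P.deg x = 3 ∧ P.G.Adj y x

/-- The number of pendant special 3-faces of `y`. -/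
noncomputable def pendCount (P : PlaneGraph V) (C₀ : List V) (y : V) : ℕ :=
  {S : Set V | PendantSpecial P C₀ y S}.ncard

/-!
A vertex `v ∉ C₀` of degree at most 2 can be deleted: `G - v` is still in `𝒢` and has smaller
`σ`, so by minimality every coloring of `C₀` superextends to `G - v`. The at most two neighbors
of `v` leave a third color free for `v`; giving `v` that color makes it differ from all its
neighbors, so no constraint at `v` or at a neighbor of `v` can fail, and `(G, C₀)` would be
superextendable.
-/

open Function

theorem mem_zip_rotate_map_iff {α β : Type*} {f : α → β} (hf : Injective f) {l : List α}
    {a b : α} :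
    (f a, f b) ∈ (l.map f).zip ((l.map f).rotate 1) ↔ (a, b) ∈ l.zip (l.rotate 1) := by
  rw [← List.map_rotate, List.zip_map]
  exact List.mem_map_of_injective (a := (a, b)) (hf.prodMap hf)

theorem SimpleGraph.Hom.ncard_edgeSet_le {α β : Type*} [Finite β] {H : SimpleGraph α}
    {G : SimpleGraph β} (φ : H →g G) (hφ : Injective φ) :
    H.edgeSet.ncard ≤ G.edgeSet.ncard :=
  Nat.card_le_card_of_injective _ (Hom.mapEdgeSet.injective φ hφ)

theorem exists_fin_embedding_range_eq_compl {α : Type*} [Fintype α] (v : α) :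
    ∃ (m : ℕ) (f : Fin m ↪ α), Set.range f = {v}ᶜ := by
  classical
  let e := Fintype.equivFin {x // x ≠ v}
  refine ⟨_, e.symm.toEmbedding.trans (Embedding.subtype _), Set.ext fun x => ?_⟩
  exact ⟨by rintro ⟨y, rfl⟩; exact (e.symm y).2, fun hx => ⟨e ⟨x, hx⟩, by simp⟩⟩

section

variable {α β : Type}

theorem cycAdj_map_iff {f : α → β} (hf : Injective f) {l : List α} {a b : α} :
    CycAdj (l.map f) (f a) (f b) ↔ CycAdj l a b := by
  simp only [CycAdj, mem_zip_rotate_map_iff hf]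

theorem IsCycleList.map {H : SimpleGraph α} {G : SimpleGraph β} {φ : H →g G}
    (hφ : Injective φ) {l : List α} (hl : IsCycleList H l) : IsCycleList G (l.map φ) := by
  obtain ⟨hlen, hnodup, hadj⟩ := hl
  refine ⟨by simpa using hlen, hnodup.map hφ, ?_⟩
  rw [← List.map_rotate, List.zip_map]
  intro p hp
  obtain ⟨⟨a, b⟩, hab, rfl⟩ := List.mem_map.1 hp
  exact φ.map_adj (hadj _ hab)

theorem IsCycleList.comap {G : SimpleGraph β} {f : α → β} (hf : Injective f) {l : List α}
    (hl : IsCycleList G (l.map f)) : IsCycleList (G.comap f) l := by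
  obtain ⟨hlen, hnodup, hadj⟩ := hl
  exact ⟨by simpa using hlen, hnodup.of_map f,
    fun ⟨a, b⟩ hab => hadj _ ((mem_zip_rotate_map_iff hf).2 hab)⟩

theorem IsTriangle.map {H : SimpleGraph α} {G : SimpleGraph β} (φ : H →g G) {a b c : α}
    (h : IsTriangle H a b c) : IsTriangle G (φ a) (φ b) (φ c) :=
  ⟨φ.map_adj h.1, φ.map_adj h.2.1, φ.map_adj h.2.2⟩

theorem NoFiveCycle.of_hom {H : SimpleGraph α} {G : SimpleGraph β} (φ : H →g G)
    (hφ : Injective φ) (hG : NoFiveCycle G) : NoFiveCycle H :=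
  fun l hl => by simpa using hG _ (hl.map hφ)

theorem NoIntersectingTriangles.of_hom {H : SimpleGraph α} {G : SimpleGraph β} (φ : H →g G)
    (hφ : Injective φ) (hG : NoIntersectingTriangles G) : NoIntersectingTriangles H := by
  intro a b c d e f habc hdef hmeet
  have himage (x y z : α) : φ '' {x, y, z} = {φ x, φ y, φ z} := by
    simp only [Set.image_insert_eq, Set.image_singleton]
  apply hφ.image_injective
  rw [himage, himage]
  refine hG _ _ _ _ _ _ (habc.map φ) (hdef.map φ) ?_
  rw [← himage, ← himage, ← Set.image_inter hφ]
  exact hmeet.image φ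

theorem PlaneGraph.InFamilyG.of_hom [Fintype α] [DecidableEq α] [Fintype β] [DecidableEq β]
    {P' : PlaneGraph α} {P : PlaneGraph β} (φ : P'.G →g P.G)
    (hφ : Injective φ) (hP : P.InFamilyG) : P'.InFamilyG :=
  ⟨hP.1.of_hom φ hφ, hP.2.of_hom φ hφ⟩

theorem IsCol200Cycle.comp [Finite β] {f : α → β} (hf : Injective f) {l : List α}
    {c : β → Fin 3}
    (hc : IsCol200Cycle (l.map f) c) : IsCol200Cycle l (c ∘ f) := by
  refine ⟨fun u w huw => hc.1 _ _ ((cycAdj_map_iff hf).2 huw), fun x hx hx0 => ?_⟩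
  calc {u | CycAdj l u x ∧ c (f u) = 0}.ncard
      ≤ {u | CycAdj (l.map f) u (f x) ∧ c u = 0}.ncard :=
        Set.ncard_le_ncard_of_injOn f (fun u hu => ⟨(cycAdj_map_iff hf).2 hu.1, hu.2⟩)
          hf.injOn
    _ ≤ 2 := hc.2 _ (List.mem_map_of_mem hx) hx0

theorem IsCol200.extend_comap [Finite β] {G : SimpleGraph β} {f : α → β} (hf : Injective f)
    (hrange : ∀ x y, G.Adj x y → x ∈ Set.range f) {c : α → Fin 3}
    (hc : IsCol200 (G.comap f) c) (d : β → Fin 3) : IsCol200 G (Function.extend f c d) := by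
  refine ⟨fun x y hxy => ?_, fun x hx0 => ?_⟩
  · obtain ⟨i, rfl⟩ := hrange x y hxy
    obtain ⟨j, rfl⟩ := hrange y _ hxy.symm
    simpa only [hf.extend_apply] using hc.1 i j hxy
  · by_cases hx : x ∈ Set.range f
    · obtain ⟨i, rfl⟩ := hx
      rw [hf.extend_apply] at hx0
      calc {u | G.Adj (f i) u ∧ Function.extend f c d u = 0}.ncard
          ≤ (f '' {j | (G.comap f).Adj i j ∧ c j = 0}).ncard := by
            refine Set.ncard_le_ncard ?_
            rintro u ⟨hiu, hu0⟩
            obtain ⟨j, rfl⟩ := hrange u _ hiu.symm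
            exact ⟨j, ⟨hiu, by rwa [hf.extend_apply] at hu0⟩, rfl⟩
        _ = {j | (G.comap f).Adj i j ∧ c j = 0}.ncard := Set.ncard_image_of_injective _ hf
        _ ≤ 2 := hc.2 i hx0
    · have hempty : {u | G.Adj x u ∧ Function.extend f c d u = 0} = ∅ :=
        Set.eq_empty_of_forall_notMem fun u hu => hx (hrange x u hu.1)
      simp [hempty]

theorem Superextendable.of_comap [Finite β] {G : SimpleGraph β} {f : α → β} (hf : Injective f)
    (hrange : ∀ x y, G.Adj x y → x ∈ Set.range f) {l : List α}
    (h : Superextendable (G.comap f) l) : Superextendable G (l.map f) := by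
  intro c₀ hc₀
  obtain ⟨c, hc, hagree, hsuper⟩ := h (c₀ ∘ f) (hc₀.comp hf)
  refine ⟨Function.extend f c c₀, hc.extend_comap hf hrange c₀, fun x hx => ?_,
    fun x hx u hu hxu => ?_⟩
  · obtain ⟨i, hi, rfl⟩ := List.mem_map.1 hx
    rw [hf.extend_apply]
    exact hagree i hi
  · obtain ⟨j, hj, rfl⟩ := List.mem_map.1 hu
    obtain ⟨i, rfl⟩ := hrange x _ hxu
    rw [hf.extend_apply, hf.extend_apply]
    exact hsuper i (fun hi => hx (List.mem_map_of_mem hi)) j hj hxu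

theorem IsCycleList.delVerts {G : SimpleGraph β} {S : Set β} {l : List β}
    (hl : IsCycleList G l) (hS : ∀ x ∈ l, x ∉ S) : IsCycleList (delVerts G S) l :=
  ⟨hl.1, hl.2.1, fun p hp => ⟨hl.2.2 p hp, hS _ (List.of_mem_zip hp).1,
    hS _ (List.mem_rotate.1 (List.of_mem_zip hp).2)⟩⟩

theorem IsCol200.update_of_delVerts [Finite β] [DecidableEq β] {G : SimpleGraph β} {v : β}
    {c : β → Fin 3} {k : Fin 3}
    (hc : IsCol200 (delVerts G {v}) c) (hk : ∀ u, G.Adj v u → c u ≠ k) :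
    IsCol200 G (update c v k) := by
  refine ⟨fun x y hxy => ?_, fun x hx0 => ?_⟩
  · rcases eq_or_ne x v with rfl | hx
    · rw [update_self, update_of_ne hxy.ne.symm]
      exact fun _ => (hk y hxy).symm
    rcases eq_or_ne y v with rfl | hy
    · rw [update_self, update_of_ne hx]
      exact fun _ => hk x hxy.symm
    · rw [update_of_ne hx, update_of_ne hy]
      exact hc.1 x y ⟨hxy, hx, hy⟩
  · rcases eq_or_ne x v with rfl | hx
    · rw [update_self] at hx0
      have hempty : {u | G.Adj x u ∧ update c x k u = 0} = ∅ :=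
        Set.eq_empty_of_forall_notMem fun u ⟨hxu, hu0⟩ => hk u hxu <| by
          rwa [update_of_ne hxu.ne.symm, ← hx0] at hu0
      simp [hempty]
    · rw [update_of_ne hx] at hx0
      refine (Set.ncard_le_ncard ?_).trans (hc.2 x hx0)
      rintro u ⟨hxu, hu0⟩
      have hu : u ≠ v := by
        rintro rfl
        rw [update_self] at hu0
        exact hk x hxu.symm (hx0.trans hu0.symm)
      exact ⟨⟨hxu, hx, hu⟩, by rwa [update_of_ne hu] at hu0⟩

theorem Superextendable.of_delVerts [Finite β] [DecidableEq β] {G : SimpleGraph β} {l : List β}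
    {v : β} (hv : v ∉ l)
    (hdeg : {u | G.Adj v u}.ncard ≤ 2) (h : Superextendable (delVerts G {v}) l) :
    Superextendable G l := by
  intro c₀ hc₀
  obtain ⟨c, hc, hagree, hsuper⟩ := h c₀ hc₀
  obtain ⟨k, hk⟩ : ∃ k, k ∉ c '' {u | G.Adj v u} := by
    by_contra! hall
    have hcard := (Set.ncard_image_le (f := c)).trans hdeg
    rw [Set.eq_univ_of_forall hall, Set.ncard_univ, Nat.card_eq_fintype_card,
      Fintype.card_fin] at hcard
    omega
  have hk' : ∀ u, G.Adj v u → c u ≠ k := fun u hu hck => hk ⟨u, hu, hck⟩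
  refine ⟨update c v k, hc.update_of_delVerts hk', fun x hx => ?_, fun x hx u hu hxu => ?_⟩
  · rw [update_of_ne (ne_of_mem_of_not_mem hx hv)]
    exact hagree x hx
  · have huv : u ≠ v := ne_of_mem_of_not_mem hu hv
    rw [update_of_ne huv]
    rcases eq_or_ne x v with rfl | hxv
    · rw [update_self]
      exact (hk' u hxu).symm
    · rw [update_of_ne hxv]
      exact hsuper x hx u hu ⟨hxu, hxv, huv⟩

end

/-- The combinatorial model of a plane graph imposes no planarity condition: every graph with a
cycle carries one, with that cycle as its only face. -/
def PlaneGraph.ofCycle {G : SimpleGraph V} {C : List V} (hC : IsCycleList G C) :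
    PlaneGraph V where
  G := G
  faces := {C}
  outer := C
  outer_mem := rfl
  faces_cycle := by
    rintro l rfl
    exact hC
  inside l := {x | x ∉ l}
  outside _ := ∅
  inside_outside_cover l _ x := by
    by_cases hx : x ∈ l <;> simp [hx]
  inside_outside_disjoint _ := Set.disjoint_empty _
  on_cycle_not_inside_outside _ x hx := ⟨fun h => h hx, Set.notMem_empty x⟩
  no_edge_inside_outside _ _ _ _ _ hw := absurd hw (Set.notMem_empty _)
  inner_face_inside_empty := by
    rintro l rfl hne
    exact absurd ⟨0, Or.inl (List.rotate_zero l)⟩ hne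
  outer_outside_empty := rfl

/-- In the minimal counterexample `(G, C₀)`, every vertex of `G`
not on `C₀` has degree at least 3. -/
theorem mincex_min_degree_three
    (P : PlaneGraph V) (C₀ : List V) (h : IsMinCex P C₀) :
    ∀ v : V, v ∉ C₀ → 3 ≤ P.deg v := by
  intro v hv
  by_contra! hdeg
  obtain ⟨hfam, hcyc, hlen, hnse, hmin⟩ := h
  obtain ⟨m, f, hrange⟩ := exists_fin_embedding_range_eq_compl v
  have hv_range : ∀ x, x ≠ v → x ∈ Set.range f := fun x hx => hrange ▸ hx
  have hC₀v : ∀ x ∈ C₀, x ≠ v := fun x hx => ne_of_mem_of_not_mem hx hv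
  obtain ⟨C', rfl⟩ : C₀ ∈ Set.range (List.map f) := by
    rw [Set.range_list_map]
    exact fun x hx => hv_range x (hC₀v x hx)
  set H := (delVerts P.G {v}).comap f
  have hC' : IsCycleList H C' := (hcyc.delVerts hC₀v).comap f.injective
  let φ : H →g P.G := ⟨f, fun hij => hij.1⟩
  have hm : m < Fintype.card V := by
    simpa using Fintype.card_lt_of_injective_of_notMem f f.injective (b := v) (by simp [hrange])
  have hσ : (PlaneGraph.ofCycle hC').sigma < P.sigma :=
    Nat.add_lt_add_of_lt_of_le (by simpa using hm) (φ.ncard_edgeSet_le f.injective)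
  have hsup := hmin m _ C' (hfam.of_hom φ f.injective) hC' (by simpa using hlen) hσ
  have hdel_range : ∀ x y, (delVerts P.G {v}).Adj x y → x ∈ Set.range f :=
    fun x _ hxy => hv_range x hxy.2.1
  exact hnse <| .of_delVerts hv (Nat.le_of_lt_succ hdeg) (.of_comap f.injective hdel_range hsup)
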